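/- arXiv:2111.11648 — 4 statements merged into one kernel-verified Lean document; each statement's English description precedes it below -/
import Mathlib

section
/- If an interface connects a state (ε⁻, σ⁻) with ε⁻ ≤ ε₁ₘ on the phase-1 branch (σ⁻ = E₁ε⁻) to a state (ε⁺, σ⁺) with ε⁺ > ε₂ₘ on the phase-2 branch (σ⁺ = E₂ε⁺), with ε⁻ ≠ ε⁺, and satisfies the Rankine–Hugoniot jump condition ρṡ² = (σ⁺ - σ⁻)/(ε⁺ - ε⁻), then ρṡ² < E₁; i.e., the interface speed satisfies |ṡ| < c₁ where c₁ = √(E₁/ρ). -/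
theorem chord_slope_lt_of_lt {E₁ E₂ a b : ℝ} (hE : E₂ < E₁) (hab : a < b) (hb : 0 < b) :
    (E₂ * b - E₁ * a) / (b - a) < E₁ := by
  rw [div_lt_iff₀ (sub_pos.2 hab)]
  calc E₂ * b - E₁ * a < E₁ * b - E₁ * a := by gcongr
    _ = E₁ * (b - a) := by ring

theorem interface_subsonic_wrt_phase1_general (E1 E2 e1m e2m ρ sdot εm εp σm σp : ℝ)
    (hE : E2 < E1)
    (h1 : 0 < e1m) (h12 : e1m < e2m)
    (hεm : εm ≤ e1m) (hεp : e2m < εp)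
    (hσm : σm = E1 * εm) (hσp : σp = E2 * εp)
    (hjump : ρ * sdot^2 = (σp - σm) / (εp - εm)) :
    ρ * sdot^2 < E1 := by
  rw [hjump, hσm, hσp]
  exact chord_slope_lt_of_lt hE (by linarith) (by linarith)

theorem interface_subsonic_wrt_phase1 (E1 E2 e1m e2m ρ sdot εm εp σm σp : ℝ)
    (hE : E2 < E1) (hE2 : 0 < E2) (hρ : 0 < ρ)
    (h1 : 0 < e1m) (h12 : e1m < e2m)
    (hεm : εm ≤ e1m) (hεp : e2m < εp)
    (hσm : σm = E1 * εm) (hσp : σp = E2 * εp)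
    (hne : εm ≠ εp)
    (hjump : ρ * sdot^2 = (σp - σm) / (εp - εm)) :
    ρ * sdot^2 < E1 :=
  interface_subsonic_wrt_phase1_general E1 E2 e1m e2m ρ sdot εm εp σm σp hE h1 h12 hεm hεp hσm hσp
    hjump
end

section
/- If 𝓔 solves (1/E₂)σ̂(𝓔) - M₂(ν/c₂)𝓔' - (λ/c₂²)𝓔'' = M₂²𝓔 + C and the limits 𝓔(±∞) = 𝓔^{±∞} exist with 𝓔'(x̃) → 0 and 𝓔''(x̃) → 0 as x̃ → ±∞, and 𝓔^{+∞} ≠ 𝓔^{-∞}, then (σ̂(𝓔^{+∞}) - σ̂(𝓔^{-∞}))/(𝓔^{+∞} - 𝓔^{-∞}) = E₂M₂². -/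
/-! Letting x̃ → ±∞ in the equation kills the derivative terms, so both far-field states lie
on the line σ̂(E) = E₂ (M₂² E + C); the chord between them therefore has slope E₂ M₂². -/

open Filter Topology

theorem mul_apply_eq_of_tendsto {l : Filter ℝ} [l.NeBot] {σ f g h : ℝ → ℝ} {L a α β k C : ℝ}
    (hσ : ContinuousAt σ L) (hf : Tendsto f l (𝓝 L)) (hg : Tendsto g l (𝓝 0))
    (hh : Tendsto h l (𝓝 0)) (heq : ∀ x, a * σ (f x) - α * g x - β * h x = k * f x + C) :
    a * σ L = k * L + C := by
  have hlhs : Tendsto (fun x => a * σ (f x) - α * g x - β * h x) l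
      (𝓝 (a * σ L - α * 0 - β * 0)) :=
    (((hσ.tendsto.comp hf).const_mul a).sub (hg.const_mul α)).sub (hh.const_mul β)
  have hrhs : Tendsto (fun x => k * f x + C) l (𝓝 (k * L + C)) :=
    (hf.const_mul k).add_const C
  simpa using tendsto_nhds_unique (hlhs.congr heq) hrhs

theorem chord_slope_eq_of_mul_eq_affine {σ : ℝ → ℝ} {a k C x y : ℝ} (ha : a ≠ 0)
    (hx : a * σ x = k * x + C) (hy : a * σ y = k * y + C) (hxy : x ≠ y) :
    (σ x - σ y) / (x - y) = k / a := by
  rw [div_eq_div_iff (sub_ne_zero.mpr hxy) ha]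
  linear_combination hx - hy

theorem far_field_chord_condition_general (E2 M2 ν lam c2 C : ℝ)
    (hE2 : 0 < E2)
    (σ : ℝ → ℝ) (hσ : Continuous σ)
    (𝓔 : ℝ → ℝ)
    (hode : ∀ x : ℝ,
      (1 / E2) * σ (𝓔 x) - M2 * (ν / c2) * deriv 𝓔 x
        - (lam / c2^2) * iteratedDeriv 2 𝓔 x = M2^2 * 𝓔 x + C)
    (Ep Em : ℝ)
    (hlimp : Filter.Tendsto 𝓔 Filter.atTop (nhds Ep))
    (hlimm : Filter.Tendsto 𝓔 Filter.atBot (nhds Em))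
    (hdp : Filter.Tendsto (deriv 𝓔) Filter.atTop (nhds 0))
    (hdm : Filter.Tendsto (deriv 𝓔) Filter.atBot (nhds 0))
    (hddp : Filter.Tendsto (iteratedDeriv 2 𝓔) Filter.atTop (nhds 0))
    (hddm : Filter.Tendsto (iteratedDeriv 2 𝓔) Filter.atBot (nhds 0))
    (hne : Ep ≠ Em) :
    (σ Ep - σ Em) / (Ep - Em) = E2 * M2^2 := by
  have hp := mul_apply_eq_of_tendsto hσ.continuousAt hlimp hdp hddp hode
  have hm := mul_apply_eq_of_tendsto hσ.continuousAt hlimm hdm hddm hode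
  rw [chord_slope_eq_of_mul_eq_affine (one_div_ne_zero hE2.ne') hp hm hne]
  field_simp

theorem far_field_chord_condition (E2 M2 ν lam c2 C : ℝ)
    (hE2 : 0 < E2) (hν : 0 < ν) (hlam : 0 < lam) (hc2 : 0 < c2)
    (σ : ℝ → ℝ) (hσ : Continuous σ)
    (𝓔 : ℝ → ℝ) (h𝓔 : ContDiff ℝ 2 𝓔)
    (hode : ∀ x : ℝ,
      (1 / E2) * σ (𝓔 x) - M2 * (ν / c2) * deriv 𝓔 x
        - (lam / c2^2) * iteratedDeriv 2 𝓔 x = M2^2 * 𝓔 x + C)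
    (Ep Em : ℝ)
    (hlimp : Filter.Tendsto 𝓔 Filter.atTop (nhds Ep))
    (hlimm : Filter.Tendsto 𝓔 Filter.atBot (nhds Em))
    (hdp : Filter.Tendsto (deriv 𝓔) Filter.atTop (nhds 0))
    (hdm : Filter.Tendsto (deriv 𝓔) Filter.atBot (nhds 0))
    (hddp : Filter.Tendsto (iteratedDeriv 2 𝓔) Filter.atTop (nhds 0))
    (hddm : Filter.Tendsto (iteratedDeriv 2 𝓔) Filter.atBot (nhds 0))
    (hne : Ep ≠ Em) :
    (σ Ep - σ Em) / (Ep - Em) = E2 * M2^2 :=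
  far_field_chord_condition_general E2 M2 ν lam c2 C hE2 σ hσ 𝓔 hode Ep Em hlimp hlimm hdp hdm hddp
    hddm hne
end

section
/- For the phase-field model energy difference: if ε⁻ and ε⁺ satisfy σ_M = E₁ε⁺ = E₂ε⁻ and ½E₂(ε⁻)² + ΔΨ - σ_M ε⁻ = ½E₁(ε⁺)² - σ_M ε⁺, then σ_M² = 2ΔΨ/(1/E₂ - 1/E₁); hence the Maxwell stress of the dynamic phase-field model coincides with that of classical elasticity. -/
/-! At a common stress `σ = E ε` the potential energy `½ E ε² - σ ε` of a linear elastic phase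
equals `-σ² / (2 E)`, so equating the potentials of the two phases is a linear equation in `σ²`
whose coefficient is the compliance jump `1/E₂ - 1/E₁`. -/

lemma elastic_potential_eq_of_stress_eq {E σ ε : ℝ} (hE : E ≠ 0) (hσ : σ = E * ε) :
    1 / 2 * E * ε ^ 2 - σ * ε = -(σ ^ 2 / (2 * E)) := by
  subst hσ
  field_simp
  ring

lemma sq_stress_mul_compliance_jump {E1 E2 ΔΨ σ εm εp : ℝ} (hE1 : E1 ≠ 0) (hE2 : E2 ≠ 0)
    (h1 : σ = E1 * εp) (h2 : σ = E2 * εm)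
    (heq : 1 / 2 * E2 * εm ^ 2 + ΔΨ - σ * εm = 1 / 2 * E1 * εp ^ 2 - σ * εp) :
    σ ^ 2 * (1 / E2 - 1 / E1) = 2 * ΔΨ := by
  have hpotentials : -(σ ^ 2 / (2 * E2)) + ΔΨ = -(σ ^ 2 / (2 * E1)) := by
    rw [← elastic_potential_eq_of_stress_eq hE1 h1, ← elastic_potential_eq_of_stress_eq hE2 h2]
    linear_combination heq
  field_simp at hpotentials ⊢
  linear_combination -hpotentials

theorem maxwell_stress_phase_field_general (E1 E2 ΔΨ σM εm εp : ℝ)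
    (hE : E2 < E1) (hE2 : 0 < E2)
    (h1 : σM = E1 * εp) (h2 : σM = E2 * εm)
    (heq : (1/2) * E2 * εm^2 + ΔΨ - σM * εm = (1/2) * E1 * εp^2 - σM * εp) :
    σM^2 = 2 * ΔΨ / (1 / E2 - 1 / E1) := by
  have hjump : 0 < 1 / E2 - 1 / E1 := sub_pos.mpr (one_div_lt_one_div_of_lt hE2 hE)
  refine eq_div_of_mul_eq hjump.ne' ?_
  exact sq_stress_mul_compliance_jump (hE2.trans hE).ne' hE2.ne' h1 h2 heq

theorem maxwell_stress_phase_field (E1 E2 ΔΨ σM εm εp : ℝ)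
    (hE : E2 < E1) (hE2 : 0 < E2) (hΔΨ : 0 < ΔΨ)
    (h1 : σM = E1 * εp) (h2 : σM = E2 * εm)
    (heq : (1/2) * E2 * εm^2 + ΔΨ - σM * εm = (1/2) * E1 * εp^2 - σM * εp) :
    σM^2 = 2 * ΔΨ / (1 / E2 - 1 / E1) :=
  maxwell_stress_phase_field_general E1 E2 ΔΨ σM εm εp hE hE2 h1 h2 heq
end

section
/- For a quasistatic equilibrium configuration with constant stress σ₀ ∈ (E₂ε₂ₘ, E₁ε₁ₘ) in the two-well material, there exist uncountably many distinct single-interface strain fields ε(x) = σ₀/E₁ for x < s and ε(x) = σ₀/E₂ for x ≥ s (parametrized by the interface location s ∈ (0,L)) all satisfying the equilibrium field equation ∂ₓσ = 0 and the jump condition ⟦σ⟧ = 0; hence quasistatic equilibrium is nonunique. -/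
/-! The strain fields with an interface at `s` jump from `σ₀/E₁` to `σ₀/E₂` exactly at `s`, and
these two values differ, so the interface location can be read off the field: distinct
locations give distinct fields, and the interval `(0, L)` of locations is uncountable. The stress
`E₁ (σ₀/E₁) = E₂ (σ₀/E₂) = σ₀` is the same on both sides, so every such field is in equilibrium. -/

open Set

theorem injective_ite_lt {α β : Type*} [LinearOrder α] {a b : β} (hab : a ≠ b) :
    Function.Injective (fun (s x : α) => if x < s then a else b) := by
  intro s t hst
  by_contra hne
  wlog h : s < t generalizing s t
  · exact this hst.symm (Ne.symm hne) (lt_of_le_of_ne (not_lt.mp h) (Ne.symm hne))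
  have hs := congrFun hst s
  simp only [lt_irrefl, h, if_false, if_true] at hs
  exact hab hs.symm

theorem not_countable_image_Ioo_of_injOn {β : Type*} {f : ℝ → β} {a b : ℝ} (hab : a < b)
    (hf : InjOn f (Ioo a b)) : ¬ (f '' Ioo a b).Countable := fun hc =>
  (Cardinal.Real.Ioo_countable_iff.mp ((mapsTo_image f _).countable_of_injOn hf hc)).not_gt hab

theorem div_ne_div_left {K : Type*} [DivisionRing K] {σ E₁ E₂ : K} (hσ : σ ≠ 0)
    (hE : E₁ ≠ E₂) : σ / E₁ ≠ σ / E₂ := fun h =>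
  hE (inv_injective (mul_left_cancel₀ hσ (by simpa only [div_eq_mul_inv] using h)))

theorem quasistatic_nonuniqueness_general (E1 E2 e1m e2m σ0 L : ℝ)
    (hE : E2 < E1) (hE2 : 0 < E2)
    (h1 : 0 < e1m) (h12 : e1m < e2m) (hL : 0 < L)
    (hσ0lo : E2 * e2m < σ0)
    (strainField : ℝ → ℝ → ℝ)
    (hstrain : strainField = fun s x => if x < s then σ0 / E1 else σ0 / E2)
    (stressField : ℝ → ℝ → ℝ)
    (hstress : stressField = fun s x =>
      if x < s then E1 * (σ0 / E1) else E2 * (σ0 / E2)) :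
    Set.InjOn strainField (Set.Ioo 0 L) ∧
    ¬ (strainField '' Set.Ioo 0 L).Countable ∧
    ∀ s ∈ Set.Ioo (0:ℝ) L,
      (∀ x : ℝ, stressField s x = σ0) ∧
      (∀ x : ℝ, deriv (stressField s) x = 0) := by
  have hE1 : E1 ≠ 0 := (hE2.trans hE).ne'
  have hσ0 : σ0 ≠ 0 := (lt_trans (mul_pos hE2 (h1.trans h12)) hσ0lo).ne'
  have hinj : InjOn strainField (Ioo 0 L) := hstrain ▸
    (injective_ite_lt (div_ne_div_left hσ0 hE.ne')).injOn
  have hconst : ∀ s, stressField s = fun _ => σ0 := by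
    simp only [hstress, mul_div_cancel₀ σ0 hE1, mul_div_cancel₀ σ0 hE2.ne', ite_self,
      implies_true]
  refine ⟨hinj, not_countable_image_Ioo_of_injOn hL hinj, fun s _ => ⟨fun x => ?_, fun x => ?_⟩⟩
  · rw [hconst]
  · rw [hconst, deriv_const]

theorem quasistatic_nonuniqueness (E1 E2 e1m e2m σ0 L : ℝ)
    (hE : E2 < E1) (hE2 : 0 < E2)
    (h1 : 0 < e1m) (h12 : e1m < e2m) (hL : 0 < L)
    (hσ0lo : E2 * e2m < σ0) (hσ0hi : σ0 < E1 * e1m)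
    (strainField : ℝ → ℝ → ℝ)
    (hstrain : strainField = fun s x => if x < s then σ0 / E1 else σ0 / E2)
    (stressField : ℝ → ℝ → ℝ)
    (hstress : stressField = fun s x =>
      if x < s then E1 * (σ0 / E1) else E2 * (σ0 / E2)) :
    Set.InjOn strainField (Set.Ioo 0 L) ∧
    ¬ (strainField '' Set.Ioo 0 L).Countable ∧
    ∀ s ∈ Set.Ioo (0:ℝ) L,
      (∀ x : ℝ, stressField s x = σ0) ∧
      (∀ x : ℝ, deriv (stressField s) x = 0) :=
  quasistatic_nonuniqueness_general E1 E2 e1m e2m σ0 L hE hE2 h1 h12 hL hσ0lo strainField hstrain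
    stressField hstress
end
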